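/- Let π = p_1⋯p_n be a permutation of {1,…,n} and let a ∈ {1,…,n+1}. Let π⁺a denote the permutation of {1,…,n+1} obtained by increasing by one every entry of π that is ≥ a and then appending a at the end. Then π⁺a is ir-subdiagonal if and only if π is ir-subdiagonal and a ≤ 1 + asc(π). -/
import Mathlib


/-- Entry of the word `w` at (1-based) position `i`. -/
def ent (w : List ℕ) (i : ℕ) : ℕ := w.getD (i - 1) 0

/-- `w` is an endofunction of `{1,…,n}`, where `n = w.length`. -/
def IsEndo (w : List ℕ) : Prop := ∀ x ∈ w, 1 ≤ x ∧ x ≤ w.length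

/-- `w` is an inversion sequence. -/
def IsInvSeq (w : List ℕ) : Prop :=
  ∀ i ∈ Finset.Icc 1 w.length, 1 ≤ ent w i ∧ ent w i ≤ i

/-- The set of `d`-ascents of `w` (1-based positions): position `1` is always a
`d`-ascent, and `i ≥ 2` is a `d`-ascent if `a_i > a_{i-1} - d`. -/
def ascSet (d : ℕ) (w : List ℕ) : Finset ℕ :=
  (Finset.Icc 1 w.length).filter fun i => i = 1 ∨ ent w (i - 1) < ent w i + d

/-- The number of `d`-ascents of `w`. -/
def ascCard (d : ℕ) (w : List ℕ) : ℕ := (ascSet d w).card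

/-- `w` is a `d`-ascent sequence. -/
def IsDAscSeq (d : ℕ) (w : List ℕ) : Prop :=
  IsEndo w ∧ ∀ i ∈ Finset.Icc 1 w.length, ent w i ≤ 1 + ascCard d (w.take (i - 1))

/-- One step of the map `M`: add one to every entry strictly to the left of
position `j` that is weakly larger than the entry in position `j`. -/
def Mstep (w : List ℕ) (j : ℕ) : List ℕ :=
  w.mapIdx fun k x => if k + 1 < j ∧ ent w j ≤ x then x + 1 else x

/-- The `d`-hat map: apply `Mstep` successively at the `d`-ascents of `w`,
listed in increasing order. -/
def hatd (d : ℕ) (w : List ℕ) : List ℕ :=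
  ((ascSet d w).sort (· ≤ ·)).foldl Mstep w

/-- Largest entry of `w`. -/
def maxEnt (w : List ℕ) : ℕ := w.foldr max 0

/-- `w` is a Cayley permutation: its image is `{1,…,max w}`. -/
def IsCayley (w : List ℕ) : Prop := ∀ x, x ∈ w ↔ (1 ≤ x ∧ x ≤ maxEnt w)

open Classical in
/-- The set of positions of leftmost copies of the values of `w`. -/
noncomputable def nubSet (w : List ℕ) : Finset ℕ :=
  (Finset.Icc 1 w.length).filter fun i =>
    ∀ j ∈ Finset.Icc 1 w.length, ent w j = ent w i → i ≤ j

/-- The least `d` such that `w` is a `d`-ascent sequence. -/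
noncomputable def mind (w : List ℕ) : ℕ := sInf {d | IsDAscSeq d w}

/-- The set `H(w)` of all the (meaningful) `d`-hats of `w`. -/
def Hset (w : List ℕ) : Set (List ℕ) := {x | ∃ d, mind w ≤ d ∧ x = hatd d w}

/-- The max-hat map. -/
def hatmax (w : List ℕ) : List ℕ := hatd (w.length - 1) w

/-- Weak descent set of `w`. -/
def wDesSet (w : List ℕ) : Finset ℕ :=
  (Finset.Icc 2 w.length).filter fun i => ent w i ≤ ent w (i - 1)

/-- The number of weak descents of `w`. -/
def wdes (w : List ℕ) : ℕ := (wDesSet w).card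

/-- `i` is a right-left minimum index of `w`. -/
def IsRLMinIdx (w : List ℕ) (i : ℕ) : Prop :=
  1 ≤ i ∧ i ≤ w.length ∧ ∀ j, i < j → j ≤ w.length → ent w i < ent w j

/-- The set of right-left minima pairs of `w`. -/
def rlMinP (w : List ℕ) : Set (ℕ × ℕ) :=
  {p | IsRLMinIdx w p.1 ∧ p.2 = ent w p.1}

/-- `w` is the word of a permutation of `{1,…,n}`, where `n = w.length`. -/
def IsPermWord (w : List ℕ) : Prop :=
  w.Nodup ∧ ∀ x ∈ w, 1 ≤ x ∧ x ≤ w.length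

/-- Add one to every entry of `w` that is `≥ a`. -/
def plus (w : List ℕ) (a : ℕ) : List ℕ :=
  w.map fun x => if a ≤ x then x + 1 else x

/-- Add one to every entry of `w` that is `≥ a`, then append `a` at the end. -/
def plusApp (w : List ℕ) (a : ℕ) : List ℕ := plus w a ++ [a]

/-- The index of the maximal increasing run of `w` containing position `i`:
one plus the number of descents up to position `i`. -/
def irIdx (w : List ℕ) (i : ℕ) : ℕ :=
  1 + ((Finset.Icc 2 i).filter fun j => ent w j < ent w (j - 1)).card

/-- `w` is ir-subdiagonal: every entry `c` in the `i`th maximal increasing run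
satisfies `c ≤ n + 1 - i`. -/
def IsIrSub (w : List ℕ) : Prop :=
  ∀ i ∈ Finset.Icc 1 w.length, ent w i + irIdx w i ≤ w.length + 1

/-- The index of the maximal decreasing run of `w` containing position `i`. -/
def drIdx (w : List ℕ) (i : ℕ) : ℕ :=
  1 + ((Finset.Icc 2 i).filter fun j => ent w (j - 1) < ent w j).card

/-- `w` is dr-subdiagonal: every entry `c` in the `i`th maximal decreasing run
satisfies `c ≤ n + 1 - i`. -/
def IsDrSub (w : List ℕ) : Prop :=
  ∀ i ∈ Finset.Icc 1 w.length, ent w i + drIdx w i ≤ w.length + 1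

/-- `w` is a weak descent sequence. -/
def IsWDesSeq (w : List ℕ) : Prop :=
  IsInvSeq w ∧ ∀ i ∈ Finset.Icc 1 w.length, ent w i ≤ 1 + wdes (w.take (i - 1))

/-- `w` is a primitive ascent sequence: an ascent sequence with no flat steps. -/
def IsPrimAscSeq (w : List ℕ) : Prop :=
  IsDAscSeq 0 w ∧ ∀ i ∈ Finset.Icc 1 (w.length - 1), ent w i ≠ ent w (i + 1)

/-- Insert position `i` into a list of positions sorted by the Burge order:
ascending entries, ties broken by descending position. -/
def bInsert (w : List ℕ) (i : ℕ) : List ℕ → List ℕ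
  | [] => [i]
  | j :: t =>
      if ent w i < ent w j ∨ (ent w i = ent w j ∧ j ≤ i) then i :: j :: t
      else j :: bInsert w i t

/-- The permutation `burget w` obtained from the Burge transpose of the biword
with top row `1,…,n` and bottom row `w`: sort the positions `1,…,n` in
ascending order of their entries, breaking ties in descending order of
position. -/
def burget (w : List ℕ) : List ℕ :=
  ((List.range w.length).map (· + 1)).foldr (bInsert w) []

lemma plusApp_length (w : List ℕ) (a : ℕ) : (plusApp w a).length = w.length + 1 := by
  simp [plusApp, plus]

lemma ent_eq_getElem (w : List ℕ) {i : ℕ} (h1 : 1 ≤ i) (h2 : i ≤ w.length) :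
    ent w i = w[i-1]'(by omega) := by
  simp [ent, List.getD_eq_getElem?_getD, List.getElem?_eq_getElem (show i-1 < w.length by omega)]

lemma ent_plusApp (w : List ℕ) (a : ℕ) {i : ℕ} (h1 : 1 ≤ i) (h2 : i ≤ w.length) :
    ent (plusApp w a) i = if a ≤ ent w i then ent w i + 1 else ent w i := by
  have hi : i - 1 < w.length := by omega
  rw [ent_eq_getElem w h1 h2, ent_eq_getElem (plusApp w a) h1 (by rw [plusApp_length]; omega)]
  simp [plusApp, plus, List.getElem_append, hi]

lemma ent_plusApp_last (w : List ℕ) (a : ℕ) : ent (plusApp w a) (w.length + 1) = a := by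
  rw [ent_eq_getElem (plusApp w a) (by omega) (by rw [plusApp_length])]
  simp [plusApp, plus]

lemma ent_ne (w : List ℕ) (hw : w.Nodup) {j : ℕ} (h1 : 2 ≤ j) (h2 : j ≤ w.length) :
    ent w j ≠ ent w (j-1) := by
  rw [ent_eq_getElem w (by omega) h2, ent_eq_getElem w (by omega) (by omega)]
  intro h
  have := (List.Nodup.getElem_inj_iff hw).mp h
  omega

lemma desc_iff (w : List ℕ) (a : ℕ) {j : ℕ} (h1 : 2 ≤ j) (h2 : j ≤ w.length) :
    (ent (plusApp w a) j < ent (plusApp w a) (j-1)) ↔ ent w j < ent w (j-1) := by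
  rw [ent_plusApp w a (by omega) h2, ent_plusApp w a (i := j-1) (by omega) (by omega)]
  split_ifs <;> omega

lemma irIdx_plusApp (w : List ℕ) (a : ℕ) {i : ℕ} (h2 : i ≤ w.length) :
    irIdx (plusApp w a) i = irIdx w i := by
  unfold irIdx
  have h : ((Finset.Icc 2 i).filter fun j => ent (plusApp w a) j < ent (plusApp w a) (j - 1))
      = (Finset.Icc 2 i).filter fun j => ent w j < ent w (j - 1) := by
    apply Finset.filter_congr
    intro j hj
    simp only [Finset.mem_Icc] at hj
    exact desc_iff w a hj.1 (le_trans hj.2 h2)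
  rw [h]

lemma irIdx_mono (w : List ℕ) {i j : ℕ} (h : i ≤ j) : irIdx w i ≤ irIdx w j := by
  unfold irIdx
  have := Finset.card_le_card (Finset.filter_subset_filter
    (fun k => ent w k < ent w (k-1)) (Finset.Icc_subset_Icc_right (a := 2) h))
  omega

lemma irIdx_plusApp_last (w : List ℕ) (a : ℕ) (hn : 1 ≤ w.length) :
    irIdx (plusApp w a) (w.length + 1)
      = irIdx w w.length + (if a ≤ ent w w.length then 1 else 0) := by
  have hIcc : Finset.Icc 2 (w.length + 1) = insert (w.length+1) (Finset.Icc 2 w.length) := by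
    ext j; simp only [Finset.mem_Icc, Finset.mem_insert]; omega
  have hfil : ((Finset.Icc 2 w.length).filter
        fun j => ent (plusApp w a) j < ent (plusApp w a) (j - 1))
      = (Finset.Icc 2 w.length).filter fun j => ent w j < ent w (j - 1) := by
    apply Finset.filter_congr
    intro j hj
    simp only [Finset.mem_Icc] at hj
    exact desc_iff w a hj.1 hj.2
  have hnotmem : w.length + 1 ∉ Finset.Icc 2 w.length := by
    simp only [Finset.mem_Icc]; omega
  have hlast : (ent (plusApp w a) (w.length+1) < ent (plusApp w a) (w.length+1-1))
      ↔ a ≤ ent w w.length := by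
    have : w.length + 1 - 1 = w.length := by omega
    rw [this, ent_plusApp_last, ent_plusApp w a hn le_rfl]
    split_ifs <;> omega
  unfold irIdx
  rw [hIcc, Finset.filter_insert, hfil]
  by_cases hc : a ≤ ent w w.length
  · rw [if_pos (hlast.mpr hc), if_pos hc,
      Finset.card_insert_of_notMem (fun hmem => hnotmem (Finset.mem_of_mem_filter _ hmem))]
    omega
  · rw [if_neg (fun h => hc (hlast.mp h)), if_neg hc]
    omega

lemma asc_add_irIdx (w : List ℕ) (hw : w.Nodup) :
    ascCard 0 w + irIdx w w.length = w.length + 1 := by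
  unfold ascCard ascSet irIdx
  have key : ((Finset.Icc 1 w.length).filter
        fun i => ¬(i = 1 ∨ ent w (i-1) < ent w i + 0))
      = (Finset.Icc 2 w.length).filter fun j => ent w j < ent w (j-1) := by
    ext j
    simp only [Finset.mem_filter, Finset.mem_Icc, not_or, not_lt]
    constructor
    · rintro ⟨⟨h1, h2⟩, h3, h4⟩
      have hne := ent_ne w hw (j := j) (by omega) h2
      exact ⟨⟨by omega, h2⟩, by omega⟩
    · rintro ⟨⟨h1, h2⟩, h3⟩
      exact ⟨⟨by omega, h2⟩, by omega, by omega⟩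
  have hcard := Finset.card_filter_add_card_filter_not
    (s := Finset.Icc 1 w.length)
    (p := fun i => i = 1 ∨ ent w (i-1) < ent w i + 0)
  rw [key] at hcard
  rw [Nat.card_Icc] at hcard
  rcases Nat.eq_zero_or_pos w.length with h0 | hn
  · rw [h0] at hcard ⊢
    have : Finset.Icc 2 0 = (∅ : Finset ℕ) := by ext x; simp
    rw [this]
    simp only [Finset.filter_empty, Finset.card_empty]
    omega
  · omega

/-- for a permutation `π` of `{1,…,n}` and `a ∈ {1,…,n+1}`, the
permutation `π⁺a` is ir-subdiagonal if and only if `π` is ir-subdiagonal and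
`a ≤ 1 + asc(π)`. -/
theorem stmt14 (w : List ℕ) (hw : IsPermWord w) (a : ℕ)
    (ha1 : 1 ≤ a) (ha2 : a ≤ w.length + 1) :
    IsIrSub (plusApp w a) ↔ (IsIrSub w ∧ a ≤ 1 + ascCard 0 w) := by
  obtain ⟨hnd, hmem⟩ := hw
  have hasc := asc_add_irIdx w hnd
  rcases Nat.eq_zero_or_pos w.length with h0 | hn
  · have hw0 : w = [] := List.length_eq_zero_iff.mp h0
    subst hw0
    have ha : a = 1 := by omega
    subst ha
    constructor
    · intro _
      refine ⟨fun i hi => by simp at hi, by omega⟩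
    · intro _
      unfold IsIrSub plusApp plus irIdx ent
      decide
  · constructor
    · intro h
      have hB := h (w.length + 1) (by
        rw [plusApp_length]; exact Finset.mem_Icc.mpr ⟨by omega, le_rfl⟩)
      rw [ent_plusApp_last, irIdx_plusApp_last w a hn, plusApp_length] at hB
      constructor
      · intro i hi
        rw [Finset.mem_Icc] at hi
        have hAi := h i (by
          rw [plusApp_length]; exact Finset.mem_Icc.mpr ⟨hi.1, by omega⟩)
        rw [ent_plusApp w a hi.1 hi.2, irIdx_plusApp w a hi.2, plusApp_length] at hAi
        have hmono := irIdx_mono w hi.2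
        split_ifs at hAi hB <;> omega
      · split_ifs at hB <;> omega
    · rintro ⟨hsub, hasc'⟩
      intro i hi
      rw [plusApp_length, Finset.mem_Icc] at hi
      rcases Nat.lt_or_ge i (w.length + 1) with hlt | hge
      · have hin : i ≤ w.length := by omega
        rw [ent_plusApp w a hi.1 hin, irIdx_plusApp w a hin, plusApp_length]
        have := hsub i (Finset.mem_Icc.mpr ⟨hi.1, hin⟩)
        split_ifs <;> omega
      · have hie : i = w.length + 1 := by omega
        subst hie
        rw [ent_plusApp_last, irIdx_plusApp_last w a hn, plusApp_length]
        have hlastw := hsub w.length (Finset.mem_Icc.mpr ⟨hn, le_rfl⟩)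
        split_ifs with hc <;> omega
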